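/- Let Z be a d×d positive semidefinite real symmetric matrix whose largest eigenvalue ‖Z‖ is strictly greater than its smallest eigenvalue λ_min(Z), and let φ : ℝ → ℝ be convex. Define updim(Z) = trace(Z − λ_min(Z)·I)/(‖Z‖ − λ_min(Z)) and lowdim(Z) = trace(‖Z‖·I − Z)/(‖Z‖ − λ_min(Z)) = d − updim(Z). Then trace(φ(Z)) ≤ updim(Z)·φ(‖Z‖) + lowdim(Z)·φ(λ_min(Z)). -/

import Mathlib

open Matrix

/-- Applying a scalar function to a real symmetric matrix through its spectral
decomposition. -/
noncomputable def matFun {d : ℕ} (φ : ℝ → ℝ) (M : Matrix (Fin d) (Fin d) ℝ)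
    (hM : M.IsHermitian) : Matrix (Fin d) (Fin d) ℝ :=
  (hM.eigenvectorUnitary : Matrix (Fin d) (Fin d) ℝ) * diagonal (φ ∘ hM.eigenvalues) *
    star (hM.eigenvectorUnitary : Matrix (Fin d) (Fin d) ℝ)

/-- Largest eigenvalue of a real symmetric matrix (spectral norm for `Z ⪰ 0`). -/
noncomputable def lamMax {d : ℕ} {M : Matrix (Fin d) (Fin d) ℝ}
    (hM : M.IsHermitian) : ℝ := ⨆ i, hM.eigenvalues i

/-- Smallest eigenvalue of a real symmetric matrix. -/
noncomputable def lamMin {d : ℕ} {M : Matrix (Fin d) (Fin d) ℝ}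
    (hM : M.IsHermitian) : ℝ := ⨅ i, hM.eigenvalues i

/-- Upper intrinsic dimension `updim(Z) = trace(Z − λ_min·I)/(‖Z‖ − λ_min)`. -/
noncomputable def updim {d : ℕ} {M : Matrix (Fin d) (Fin d) ℝ}
    (hM : M.IsHermitian) : ℝ :=
  (M - lamMin hM • (1 : Matrix (Fin d) (Fin d) ℝ)).trace / (lamMax hM - lamMin hM)

/-- Lower intrinsic dimension `lowdim(Z) = trace(‖Z‖·I − Z)/(‖Z‖ − λ_min) = d − updim(Z)`. -/
noncomputable def lowdim {d : ℕ} {M : Matrix (Fin d) (Fin d) ℝ}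
    (hM : M.IsHermitian) : ℝ :=
  (lamMax hM • (1 : Matrix (Fin d) (Fin d) ℝ) - M).trace / (lamMax hM - lamMin hM)

/-! Each eigenvalue `λ` lies in `[λ_min, ‖Z‖]`, so convexity bounds `φ λ` by the chord of `φ`
over that interval. Summing over the spectrum, the chord weights add up to
`updim(Z)` and `lowdim(Z)`. -/

theorem ConvexOn.le_chord {𝕜 : Type*} [Field 𝕜] [LinearOrder 𝕜] [IsStrictOrderedRing 𝕜]
    {s : Set 𝕜} {f : 𝕜 → 𝕜} (hf : ConvexOn 𝕜 s f) {a b x : 𝕜} (ha : a ∈ s) (hb : b ∈ s)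
    (hab : a < b) (hax : a ≤ x) (hxb : x ≤ b) :
    f x ≤ (x - a) / (b - a) * f b + (b - x) / (b - a) * f a := by
  have hba : 0 < b - a := sub_pos.mpr hab
  have hweights : (b - x) / (b - a) + (x - a) / (b - a) = 1 := by
    field_simp
    ring
  have hcomb : (b - x) / (b - a) * a + (x - a) / (b - a) * b = x := by
    field_simp
    ring
  have := hf.2 ha hb (div_nonneg (sub_nonneg.mpr hxb) hba.le)
    (div_nonneg (sub_nonneg.mpr hax) hba.le) hweights
  simp only [smul_eq_mul, hcomb] at this
  linarith

section Spectrum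

variable {d : ℕ} {M : Matrix (Fin d) (Fin d) ℝ} (hM : M.IsHermitian)

theorem trace_matFun (φ : ℝ → ℝ) : (matFun φ M hM).trace = ∑ i, φ (hM.eigenvalues i) := by
  rw [matFun, trace_mul_cycle, (mem_unitaryGroup_iff').mp hM.eigenvectorUnitary.2, one_mul,
    trace_diagonal]
  rfl

theorem eigenvalues_le_lamMax (i : Fin d) : hM.eigenvalues i ≤ lamMax hM :=
  le_ciSup (Set.finite_range _).bddAbove i

theorem lamMin_le_eigenvalues (i : Fin d) : lamMin hM ≤ hM.eigenvalues i :=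
  ciInf_le (Set.finite_range _).bddBelow i

theorem trace_sub_smul_one (c : ℝ) : (M - c • 1).trace = ∑ i, (hM.eigenvalues i - c) := by
  simp [trace_sub, hM.trace_eq_sum_eigenvalues, Finset.sum_sub_distrib, mul_comm]

theorem trace_smul_one_sub (c : ℝ) : (c • 1 - M).trace = ∑ i, (c - hM.eigenvalues i) := by
  simp [trace_sub, hM.trace_eq_sum_eigenvalues, Finset.sum_sub_distrib, mul_comm]

end Spectrum

/-- **Refined intrinsic dimension bound.** For positive semidefinite `Z` with
`‖Z‖ > λ_min(Z)` and convex `φ`,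
`trace φ(Z) ≤ updim(Z)·φ(‖Z‖) + lowdim(Z)·φ(λ_min(Z))`. -/
theorem refined_intdim_bound {d : ℕ} (Z : Matrix (Fin d) (Fin d) ℝ) (hZ : Z.PosSemidef)
    (hgap : lamMin hZ.1 < lamMax hZ.1) (φ : ℝ → ℝ) (hφ : ConvexOn ℝ Set.univ φ) :
    (matFun φ Z hZ.1).trace
      ≤ updim hZ.1 * φ (lamMax hZ.1) + lowdim hZ.1 * φ (lamMin hZ.1) := by
  set m := lamMin hZ.1
  set Mx := lamMax hZ.1
  calc (matFun φ Z hZ.1).trace = ∑ i, φ (hZ.1.eigenvalues i) := trace_matFun hZ.1 φ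
    _ ≤ ∑ i, ((hZ.1.eigenvalues i - m) / (Mx - m) * φ Mx
          + (Mx - hZ.1.eigenvalues i) / (Mx - m) * φ m) :=
      Finset.sum_le_sum fun i _ => hφ.le_chord trivial trivial hgap
        (lamMin_le_eigenvalues hZ.1 i) (eigenvalues_le_lamMax hZ.1 i)
    _ = updim hZ.1 * φ Mx + lowdim hZ.1 * φ m := by
      rw [updim, lowdim, trace_sub_smul_one, trace_smul_one_sub, Finset.sum_add_distrib,
        ← Finset.sum_mul, ← Finset.sum_mul, Finset.sum_div, Finset.sum_div]
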